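/- Let c : ℤ → ℂ be a complex sequence, θ₀ ∈ [0, π/2), and suppose: (4) for every n ≥ 1, both c_n + c_{−n} and c_n − c_{−n} lie in K(θ₀); (2*) there exist a natural number N₀ and a constant M > 0 such that for every m ≥ 1, ∑_{n=m}^{2m} |c_n − c_{n+1}| ≤ M · max_{m ≤ n < m+N₀} |c_n|; (5) lim_{n→∞} n·c_n = 0; and (6) ∑_{n=1}^{∞} |c_n + c_{−n}| < ∞. Then the symmetric partial sums S_n(f,x) = ∑_{k=−n}^{n} c_k e^{ikx} converge uniformly on ℝ (so the sum function is continuous and 2π-periodic); equivalently, lim_{n→∞} sup_x |∑_{|k| ≥ n} (c_k e^{ikx} + c_{−k} e^{−ikx})| = 0. -/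

import Mathlib

open Filter Finset

lemma my_abs_sin_le (t : ℝ) (ht : 0 ≤ t) : |Real.sin t| ≤ t := by
  rcases le_or_gt 1 t with h | h
  · exact le_trans (abs_le.mpr ⟨Real.neg_one_le_sin t, Real.sin_le_one t⟩) h
  · have h0 : Real.sin t ≥ 0 := Real.sin_nonneg_of_nonneg_of_le_pi ht
      (le_trans h.le (by linarith [Real.pi_gt_three]))
    rw [abs_of_nonneg h0]; exact Real.sin_le ht

lemma sin_sum_id (y : ℝ) (l : ℕ) : ∀ n, l ≤ n →
    2 * Real.sin (y/2) * ∑ k ∈ Finset.Ioc l n, Real.sin (k * y)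
      = Real.cos ((l + 1/2) * y) - Real.cos ((n + 1/2) * y) := by
  intro n hn
  induction n, hn using Nat.le_induction with
  | base => simp
  | succ n hn ih =>
    rw [Finset.sum_Ioc_succ_top (by omega), mul_add, ih]
    have key : Real.cos ((n + 1/2) * y) - Real.cos ((n + 1 + 1/2) * y)
        = 2 * Real.sin (y/2) * Real.sin ((n+1) * y) := by
      rw [Real.cos_sub_cos]
      have h1 : (((n:ℝ) + 1/2) * y + ((n:ℝ)+1+1/2) * y)/2 = ((n:ℝ)+1)*y := by ring
      have h2 : (((n:ℝ) + 1/2) * y - ((n:ℝ)+1+1/2) * y)/2 = -(y/2) := by ring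
      rw [h1, h2, Real.sin_neg]; ring
    push_cast
    push_cast at key
    linarith [key]

lemma sin_sum_bound {y : ℝ} (hy : 0 < y) (hy2 : y ≤ Real.pi) (l n : ℕ) :
    |∑ k ∈ Finset.Ioc l n, Real.sin (k * y)| ≤ Real.pi / y := by
  have hπ := Real.pi_pos
  rcases le_or_gt l n with h | h
  · have hs : 0 < Real.sin (y/2) :=
      Real.sin_pos_of_pos_of_lt_pi (by linarith) (by linarith)
    have hsy : y / Real.pi ≤ Real.sin (y/2) := by
      have := Real.mul_le_sin (x := y/2) (by linarith) (by linarith)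
      have e : 2 / Real.pi * (y/2) = y / Real.pi := by field_simp
      linarith [e ▸ this]
    have hid := sin_sum_id y l n h
    have hb : |Real.cos ((l + 1/2) * y) - Real.cos ((n + 1/2) * y)| ≤ 2 := by
      calc |Real.cos ((l + 1/2) * y) - Real.cos ((n + 1/2) * y)|
          ≤ |Real.cos ((l + 1/2) * y)| + |Real.cos ((n + 1/2) * y)| := abs_sub _ _
        _ ≤ 2 := by linarith [Real.abs_cos_le_one ((l + 1/2) * y), Real.abs_cos_le_one ((n + 1/2) * y)]
    have habs : 2 * Real.sin (y/2) * |∑ k ∈ Finset.Ioc l n, Real.sin (k * y)| ≤ 2 := by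
      rw [← abs_of_pos (show (0:ℝ) < 2 * Real.sin (y/2) by linarith), ← abs_mul, hid]
      exact hb
    -- |sum| ≤ 1 / sin(y/2) ≤ π / y
    have h1 : |∑ k ∈ Finset.Ioc l n, Real.sin (k * y)| ≤ 1 / Real.sin (y/2) := by
      rw [le_div_iff₀ hs]; linarith
    have h2 : 1 / Real.sin (y/2) ≤ Real.pi / y := by
      rw [div_le_div_iff₀ hs hy]
      have : y / Real.pi * Real.pi ≤ Real.sin (y/2) * Real.pi :=
        mul_le_mul_of_nonneg_right hsy hπ.le
      rw [div_mul_cancel₀] at this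
      · linarith
      · exact hπ.ne'
    linarith
  · rw [Finset.Ioc_eq_empty (by omega)]
    simp; positivity

lemma abel_id (a s : ℕ → ℂ) (l : ℕ) : ∀ n,
    ∑ k ∈ Finset.Ioc l n, a k * s k
      = (∑ k ∈ Finset.Ioc l n, (a k - a (k+1)) * (∑ j ∈ Finset.Ioc l k, s j))
        + a (n+1) * ∑ j ∈ Finset.Ioc l n, s j := by
  intro n
  induction n with
  | zero => simp
  | succ n ih =>
    rcases le_or_gt l n with h | h
    · rw [Finset.sum_Ioc_succ_top h, Finset.sum_Ioc_succ_top h,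
        Finset.sum_Ioc_succ_top h, ih]
      ring
    · rcases Nat.lt_or_ge n.succ l with h' | h'
      · rw [Finset.Ioc_eq_empty (by omega)]
        simp
      · have hl : l = n + 1 := by omega
        subst hl
        simp

lemma dyadic_est (c : ℤ → ℂ) (N₀ : ℕ) (hN₀ : 0 < N₀) (M : ℝ) (hM : 0 < M)
    (h2 : ∀ m : ℕ, 1 ≤ m →
      ∑ n ∈ Finset.Icc m (2 * m), ‖c (n : ℤ) - c ((n : ℤ) + 1)‖ ≤
        M * (Finset.Ico m (m + N₀)).sup' (Finset.nonempty_Ico.mpr (Nat.lt_add_of_pos_right hN₀))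
          (fun n => ‖c (n : ℤ)‖))
    (δ : ℝ) (m₀ : ℕ) (hm₀ : 1 ≤ m₀)
    (hδ : ∀ k : ℕ, m₀ ≤ k → (k : ℝ) * ‖c (k : ℤ)‖ ≤ δ) :
    ∀ d m L, m₀ ≤ m → L ≤ m + d →
      ∑ k ∈ Finset.Icc m L, ‖c (k : ℤ) - c ((k : ℤ) + 1)‖ ≤ 2 * M * δ / m := by
  have hδ0 : 0 ≤ δ := le_trans (by positivity) (hδ m₀ le_rfl)
  have hblock : ∀ m : ℕ, m₀ ≤ m →
      ∑ n ∈ Finset.Icc m (2 * m), ‖c (n : ℤ) - c ((n : ℤ) + 1)‖ ≤ M * (δ / m) := by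
    intro m hm
    have hm1 : 1 ≤ m := le_trans hm₀ hm
    have hmpos : (0:ℝ) < m := by exact_mod_cast hm1
    refine le_trans (h2 m hm1) (mul_le_mul_of_nonneg_left ?_ hM.le)
    apply Finset.sup'_le
    intro j hj
    rw [Finset.mem_Ico] at hj
    have hjm : m ≤ j := hj.1
    have := hδ j (le_trans hm hjm)
    have hjpos : (m:ℝ) ≤ (j:ℝ) := by exact_mod_cast hjm
    rw [le_div_iff₀ hmpos]
    calc ‖c (j:ℤ)‖ * m ≤ ‖c (j:ℤ)‖ * j := by
          exact mul_le_mul_of_nonneg_left hjpos (by positivity)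
      _ ≤ δ := by linarith [this]
  intro d
  induction d with
  | zero =>
    intro m L hm hL
    have hm1 : 1 ≤ m := le_trans hm₀ hm
    have hmpos : (0:ℝ) < m := by exact_mod_cast hm1
    calc ∑ k ∈ Finset.Icc m L, ‖c (k : ℤ) - c ((k : ℤ) + 1)‖
        ≤ ∑ k ∈ Finset.Icc m (2*m), ‖c (k : ℤ) - c ((k : ℤ) + 1)‖ := by
          apply Finset.sum_le_sum_of_subset_of_nonneg
          · apply Finset.Icc_subset_Icc_right; omega
          · intro i _ _; positivity
      _ ≤ M * (δ / m) := hblock m hm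
      _ ≤ 2 * M * δ / m := by
          have e : 2 * M * δ / (m:ℝ) = 2 * (M * (δ / m)) := by ring
          have : (0:ℝ) ≤ M * (δ / m) := by positivity
          linarith [e]
  | succ d ih =>
    intro m L hm hL
    have hm1 : 1 ≤ m := le_trans hm₀ hm
    have hmpos : (0:ℝ) < m := by exact_mod_cast hm1
    rcases le_or_gt L (2*m) with hL2 | hL2
    · calc ∑ k ∈ Finset.Icc m L, ‖c (k : ℤ) - c ((k : ℤ) + 1)‖
          ≤ ∑ k ∈ Finset.Icc m (2*m), ‖c (k : ℤ) - c ((k : ℤ) + 1)‖ := by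
            apply Finset.sum_le_sum_of_subset_of_nonneg
            · exact Finset.Icc_subset_Icc_right hL2
            · intro i _ _; positivity
        _ ≤ M * (δ / m) := hblock m hm
        _ ≤ 2 * M * δ / m := by
            have e : 2 * M * δ / (m:ℝ) = 2 * (M * (δ / m)) := by ring
            have : (0:ℝ) ≤ M * (δ / m) := by positivity
            linarith [e]
    · have hsplit : Finset.Icc m L = Finset.Icc m (2*m) ∪ Finset.Icc (2*m+1) L := by
        ext i; simp only [Finset.mem_Icc, Finset.mem_union]; omega
      have hdisj : Disjoint (Finset.Icc m (2*m)) (Finset.Icc (2*m+1) L) := by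
        rw [Finset.disjoint_left]
        intro i hi hi'
        simp only [Finset.mem_Icc] at hi hi'
        omega
      rw [hsplit, Finset.sum_union hdisj]
      have h1 := hblock m hm
      have h2' := ih (2*m+1) L (by omega) (by omega)
      have h3 : 2 * M * δ / (2*m+1 : ℕ) ≤ M * (δ / m) := by
        have : ((2*m+1 : ℕ):ℝ) = 2*(m:ℝ)+1 := by push_cast; ring
        rw [this]
        rw [div_le_iff₀ (by linarith)]
        have e : M * (δ/(m:ℝ)) * (2*(m:ℝ)+1) = 2*M*δ + M*δ/(m:ℝ) := by
          field_simp
        have : (0:ℝ) ≤ M*δ/(m:ℝ) := by positivity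
        linarith [e]
      have : M * (δ / m) + M * (δ / m) = 2 * M * δ / m := by
        field_simp; ring
      linarith

lemma sine_tail (c : ℤ → ℂ) (N₀ : ℕ) (hN₀ : 0 < N₀) (M : ℝ) (hM : 0 < M)
    (h2 : ∀ m : ℕ, 1 ≤ m →
      ∑ n ∈ Finset.Icc m (2 * m), ‖c (n : ℤ) - c ((n : ℤ) + 1)‖ ≤
        M * (Finset.Ico m (m + N₀)).sup' (Finset.nonempty_Ico.mpr (Nat.lt_add_of_pos_right hN₀))
          (fun n => ‖c (n : ℤ)‖))
    (δ : ℝ) (m₀ : ℕ) (hm₀ : 1 ≤ m₀)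
    (hδ : ∀ k : ℕ, m₀ ≤ k → (k : ℝ) * ‖c (k : ℤ)‖ ≤ δ) :
    ∀ m n : ℕ, m₀ ≤ m → ∀ x : ℝ,
      ‖∑ k ∈ Finset.Ioc m n, c (k:ℤ) * ((Real.sin (k * x) : ℝ) : ℂ)‖
        ≤ (2 * Real.pi + 2 * M + 1) * δ := by
  have hδ0 : 0 ≤ δ := le_trans (by positivity) (hδ m₀ le_rfl)
  have hπ := Real.pi_pos
  have hbnd0 : (0:ℝ) ≤ (2 * Real.pi + 2 * M + 1) * δ := by
    apply mul_nonneg (by positivity) hδ0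
  suffices H : ∀ m n : ℕ, m₀ ≤ m → ∀ y : ℝ, 0 ≤ y → y ≤ Real.pi →
      ‖∑ k ∈ Finset.Ioc m n, c (k:ℤ) * ((Real.sin (k * y) : ℝ) : ℂ)‖
        ≤ (2 * Real.pi + 2 * M + 1) * δ by
    intro m n hm x
    obtain ⟨y, hy0, hyπ, σ, hσ, hsin⟩ : ∃ y, 0 ≤ y ∧ y ≤ Real.pi ∧
        ∃ σ : ℝ, |σ| = 1 ∧ ∀ k : ℕ, Real.sin (k * x) = σ * Real.sin (k * y) := by
      set z := toIocMod Real.two_pi_pos (-Real.pi) x with hz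
      have hmem := toIocMod_mem_Ioc Real.two_pi_pos (-Real.pi) x
      have hzx : ∀ k : ℕ, Real.sin (k * x) = Real.sin (k * z) := by
        intro k
        have hxz : x = z + (toIocDiv Real.two_pi_pos (-Real.pi) x : ℝ) * (2*Real.pi) := by
          have := toIocMod_add_toIocDiv_zsmul Real.two_pi_pos (-Real.pi) x
          rw [zsmul_eq_mul] at this
          linarith [this]
        rw [hxz]
        set d := toIocDiv Real.two_pi_pos (-Real.pi) x
        have e : (k:ℝ) * (z + (d:ℝ) * (2*Real.pi)) = k * z + (((k:ℤ) * d : ℤ) : ℝ) * (2*Real.pi) := by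
          push_cast; ring
        rw [e, Real.sin_add_int_mul_two_pi]
      have hmem1 : -Real.pi < z := hmem.1
      have hmem2 : z ≤ -Real.pi + 2 * Real.pi := hmem.2
      rcases le_or_gt 0 z with hz0 | hz0
      · exact ⟨z, hz0, by linarith, 1, abs_one, by intro k; rw [hzx k]; ring⟩
      · refine ⟨-z, by linarith, by linarith, -1, by simp, ?_⟩
        intro k
        rw [hzx k]
        have e : (k:ℝ) * -z = -(k * z) := by ring
        rw [e, Real.sin_neg]
        ring
    calc ‖∑ k ∈ Finset.Ioc m n, c (k:ℤ) * ((Real.sin (k * x) : ℝ) : ℂ)‖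
        = ‖(σ:ℂ) * ∑ k ∈ Finset.Ioc m n, c (k:ℤ) * ((Real.sin (k * y) : ℝ) : ℂ)‖ := by
          rw [Finset.mul_sum]
          congr 1
          apply Finset.sum_congr rfl
          intro k _
          rw [hsin k]; push_cast; ring
      _ = ‖∑ k ∈ Finset.Ioc m n, c (k:ℤ) * ((Real.sin (k * y) : ℝ) : ℂ)‖ := by
          rw [norm_mul, Complex.norm_real, Real.norm_eq_abs, hσ, one_mul]
      _ ≤ _ := H m n hm y hy0 hyπ
  intro m n hm y hy0 hyπ
  rcases eq_or_lt_of_le hy0 with hy | hy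
  · have : ∀ k ∈ Finset.Ioc m n, c (k:ℤ) * ((Real.sin (k * y) : ℝ) : ℂ) = 0 := by
      intro k _
      rw [← hy]
      simp
    rw [Finset.sum_congr rfl this]
    simpa using hbnd0
  -- y > 0 case
  set N := Nat.ceil (Real.pi / y) with hN
  have hN1 : Real.pi / y ≤ (N:ℝ) := Nat.le_ceil _
  have hN2 : (N:ℝ) < Real.pi / y + 1 := Nat.ceil_lt_add_one (by positivity)
  have hNy : (N:ℝ) * y ≤ 2 * Real.pi := by
    have h1 : (N:ℝ) * y < (Real.pi / y + 1) * y := mul_lt_mul_of_pos_right hN2 hy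
    have e : (Real.pi / y + 1) * y = Real.pi + y := by field_simp
    rw [e] at h1; linarith
  have hnear : ∀ n' : ℕ, n' ≤ m + N →
      ‖∑ k ∈ Finset.Ioc m n', c (k:ℤ) * ((Real.sin (k * y) : ℝ) : ℂ)‖
        ≤ 2 * Real.pi * δ := by
    intro n' hn'
    calc ‖∑ k ∈ Finset.Ioc m n', c (k:ℤ) * ((Real.sin (k * y) : ℝ) : ℂ)‖
        ≤ ∑ k ∈ Finset.Ioc m n', ‖c (k:ℤ) * ((Real.sin (k * y) : ℝ) : ℂ)‖ :=
          norm_sum_le _ _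
      _ ≤ ∑ _k ∈ Finset.Ioc m n', δ * y := by
          apply Finset.sum_le_sum
          intro k hk
          rw [Finset.mem_Ioc] at hk
          rw [norm_mul, Complex.norm_real, Real.norm_eq_abs]
          have hky : |Real.sin (k*y)| ≤ k * y := my_abs_sin_le _ (by positivity)
          have hkc := hδ k (by omega)
          calc ‖c (k:ℤ)‖ * |Real.sin (k*y)| ≤ ‖c (k:ℤ)‖ * (k*y) :=
                mul_le_mul_of_nonneg_left hky (by positivity)
            _ = ((k:ℝ) * ‖c (k:ℤ)‖) * y := by ring
            _ ≤ δ * y := mul_le_mul_of_nonneg_right hkc hy.le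
      _ = ((n' - m : ℕ):ℝ) * (δ * y) := by
          rw [Finset.sum_const, Nat.card_Ioc, nsmul_eq_mul]
      _ ≤ (N:ℝ) * (δ * y) := by
          apply mul_le_mul_of_nonneg_right _ (by positivity)
          exact_mod_cast (by omega : n' - m ≤ N)
      _ = ((N:ℝ) * y) * δ := by ring
      _ ≤ 2 * Real.pi * δ := mul_le_mul_of_nonneg_right hNy hδ0
  rcases le_or_gt n (m + N) with hcase | hcase
  · refine le_trans (hnear n hcase) ?_
    nlinarith
  · set l := m + N with hl
    rw [← Finset.sum_Ioc_consecutive _ (Nat.le_add_right m N) hcase.le]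
    refine le_trans (norm_add_le _ _) ?_
    have hnearb := hnear l le_rfl
    have ecast : ∀ k : ℕ, c ((k+1:ℕ):ℤ) = c ((k:ℤ)+1) := by
      intro k; norm_cast
    have hfar : ‖∑ k ∈ Finset.Ioc l n, c (k:ℤ) * ((Real.sin (k * y) : ℝ) : ℂ)‖
        ≤ (2*M+1) * δ := by
      rw [abel_id (fun k => c (k:ℤ)) (fun k => ((Real.sin (k*y):ℝ):ℂ)) l n]
      have hD : ∀ k : ℕ, ‖∑ j ∈ Finset.Ioc l k, ((Real.sin (j*y):ℝ):ℂ)‖ ≤ Real.pi / y := by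
        intro k
        have e : (∑ j ∈ Finset.Ioc l k, ((Real.sin (j*y):ℝ):ℂ))
            = (((∑ j ∈ Finset.Ioc l k, Real.sin (j*y)) : ℝ) : ℂ) := by push_cast; rfl
        rw [e, Complex.norm_real, Real.norm_eq_abs]
        exact sin_sum_bound hy hyπ l k
      refine le_trans (norm_add_le _ _) ?_
      have hBpos : (0:ℝ) < ((l+1:ℕ):ℝ) := by positivity
      have hAB : Real.pi / y ≤ ((l+1:ℕ):ℝ) := by
        have h' : (N:ℝ) ≤ ((l+1:ℕ):ℝ) := by exact_mod_cast (by omega : N ≤ l + 1)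
        linarith
      have h1 : ‖∑ k ∈ Finset.Ioc l n,
            (c (k:ℤ) - c ((k+1:ℕ):ℤ)) * ∑ j ∈ Finset.Ioc l k, ((Real.sin (j*y):ℝ):ℂ)‖
          ≤ (2*M*δ/((l+1:ℕ):ℝ)) * (Real.pi / y) := by
        refine le_trans (norm_sum_le _ _) ?_
        have step : ∀ k ∈ Finset.Ioc l n,
            ‖(c (k:ℤ) - c ((k+1:ℕ):ℤ)) * ∑ j ∈ Finset.Ioc l k, ((Real.sin (j*y):ℝ):ℂ)‖
              ≤ ‖c (k:ℤ) - c ((k:ℤ)+1)‖ * (Real.pi / y) := by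
          intro k _
          rw [norm_mul, ecast k]
          exact mul_le_mul_of_nonneg_left (hD k) (by positivity)
        refine le_trans (Finset.sum_le_sum step) ?_
        rw [← Finset.sum_mul]
        apply mul_le_mul_of_nonneg_right _ (by positivity)
        have e2 : Finset.Ioc l n = Finset.Icc (l+1) n := (Finset.Icc_add_one_left_eq_Ioc l n).symm
        rw [e2]
        exact dyadic_est c N₀ hN₀ M hM h2 δ m₀ hm₀ hδ n (l+1) n (by omega) (by omega)
      have h2' : ‖c ((n+1:ℕ):ℤ) * ∑ j ∈ Finset.Ioc l n, ((Real.sin (j*y):ℝ):ℂ)‖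
          ≤ (δ/((l+1:ℕ):ℝ)) * (Real.pi / y) := by
        rw [norm_mul]
        have hc : ‖c ((n+1:ℕ):ℤ)‖ ≤ δ / ((l+1:ℕ):ℝ) := by
          have h' := hδ (n+1) (by omega)
          have hln : ((l+1:ℕ):ℝ) ≤ ((n+1:ℕ):ℝ) := by exact_mod_cast (by omega : l+1 ≤ n+1)
          rw [le_div_iff₀ hBpos]
          calc ‖c ((n+1:ℕ):ℤ)‖ * ((l+1:ℕ):ℝ)
              ≤ ‖c ((n+1:ℕ):ℤ)‖ * ((n+1:ℕ):ℝ) :=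
                mul_le_mul_of_nonneg_left hln (by positivity)
            _ ≤ δ := by push_cast at h' ⊢; linarith
        exact mul_le_mul hc (hD n) (by positivity) (by positivity)
      have e3 : (2*M*δ/((l+1:ℕ):ℝ)) * (Real.pi / y) + (δ/((l+1:ℕ):ℝ)) * (Real.pi / y)
          = ((2*M+1)*δ) * ((Real.pi/y) / ((l+1:ℕ):ℝ)) := by
        field_simp
      have hr : (Real.pi/y) / ((l+1:ℕ):ℝ) ≤ 1 := (div_le_one hBpos).mpr hAB
      have hfin : ((2*M+1)*δ) * ((Real.pi/y) / ((l+1:ℕ):ℝ)) ≤ (2*M+1)*δ :=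
        mul_le_of_le_one_right (by positivity) hr
      linarith [h1, h2']
    calc ‖∑ k ∈ Finset.Ioc m l, c (k:ℤ) * ((Real.sin (k * y) : ℝ) : ℂ)‖
          + ‖∑ k ∈ Finset.Ioc l n, c (k:ℤ) * ((Real.sin (k * y) : ℝ) : ℂ)‖
        ≤ 2 * Real.pi * δ + (2*M+1) * δ := add_le_add hnearb hfar
      _ = (2 * Real.pi + 2 * M + 1) * δ := by ring

/-- Sufficiency in Theorem 1 of the paper: under the sector condition (4),
condition (2*), `n·cₙ → 0` (5) and `∑ |cₙ + c₋ₙ| < ∞` (6), the symmetric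
partial sums converge uniformly on ℝ to a continuous 2π-periodic function. -/
theorem theorem1_sufficiency (c : ℤ → ℂ) (θ₀ : ℝ) (hθ₀ : 0 ≤ θ₀) (hθ₁ : θ₀ < Real.pi / 2)
    (h4 : ∀ n : ℤ, 1 ≤ n →
      |(c n + c (-n)).arg| ≤ θ₀ ∧ |(c n - c (-n)).arg| ≤ θ₀)
    (h2star : ∃ N₀ : ℕ, ∃ hN₀ : 0 < N₀, ∃ M : ℝ, 0 < M ∧ ∀ m : ℕ, 1 ≤ m →
      ∑ n ∈ Finset.Icc m (2 * m), ‖c (n : ℤ) - c ((n : ℤ) + 1)‖ ≤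
        M * (Finset.Ico m (m + N₀)).sup' (Finset.nonempty_Ico.mpr (by omega))
          (fun n => ‖c (n : ℤ)‖))
    (h5 : Tendsto (fun n : ℕ => (n : ℂ) * c (n : ℤ)) atTop (nhds 0))
    (h6 : Summable (fun n : ℕ => ‖c ((n : ℤ) + 1) + c (-((n : ℤ) + 1))‖)) :
    ∃ f : ℝ → ℂ, Continuous f ∧ Function.Periodic f (2 * Real.pi) ∧
      TendstoUniformly
        (fun (n : ℕ) (x : ℝ) =>
          ∑ k ∈ Finset.Icc (-(n : ℤ)) (n : ℤ), c k * Complex.exp ((k : ℂ) * (x : ℂ) * Complex.I))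
        f atTop := by
  obtain ⟨N₀, hN₀, M, hM, h2⟩ := h2star
  have hπ := Real.pi_pos
  set S : ℕ → ℝ → ℂ := fun n x =>
    ∑ k ∈ Finset.Icc (-(n : ℤ)) (n : ℤ), c k * Complex.exp ((k : ℂ) * (x : ℂ) * Complex.I)
    with hS
  -- difference of partial sums
  have hdiff : ∀ (m : ℕ) (x : ℝ), ∀ n, m ≤ n → S n x - S m x
      = ∑ k ∈ Finset.Ioc m n, (c (k:ℤ) * Complex.exp (((k:ℤ):ℂ) * x * Complex.I)
          + c (-(k:ℤ)) * Complex.exp (((-(k:ℤ)):ℂ) * x * Complex.I)) := by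
    intro m x n hn
    induction n, hn using Nat.le_induction with
    | base => simp
    | succ n hn ih =>
      rw [Finset.sum_Ioc_succ_top hn, ← ih]
      have e : S (n+1) x - S n x = c (((n:ℕ)+1:ℕ):ℤ) * Complex.exp (((((n:ℕ)+1:ℕ):ℤ):ℂ) * x * Complex.I)
          + c (-(((n:ℕ)+1:ℕ):ℤ)) * Complex.exp (((-(((n:ℕ)+1:ℕ):ℤ)):ℂ) * x * Complex.I) := by
        have hins : Finset.Icc (-(((n:ℕ)+1:ℕ):ℤ)) ((((n:ℕ)+1:ℕ)):ℤ)
            = insert (-(((n:ℕ)+1:ℕ):ℤ)) (insert ((((n:ℕ)+1:ℕ)):ℤ) (Finset.Icc (-(n:ℤ)) (n:ℤ))) := by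
          ext a
          simp only [Finset.mem_Icc, Finset.mem_insert]
          push_cast
          omega
        have hni1 : (-(((n:ℕ)+1:ℕ):ℤ)) ∉ insert ((((n:ℕ)+1:ℕ)):ℤ) (Finset.Icc (-(n:ℤ)) (n:ℤ)) := by
          simp only [Finset.mem_insert, Finset.mem_Icc]
          push_cast
          omega
        have hni2 : ((((n:ℕ)+1:ℕ)):ℤ) ∉ Finset.Icc (-(n:ℤ)) (n:ℤ) := by
          simp only [Finset.mem_Icc]
          push_cast
          omega
        simp only [hS, hins, Finset.sum_insert hni1, Finset.sum_insert hni2]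
        rw [← add_assoc, add_sub_cancel_right]
        simp only [Int.cast_neg]
        apply add_comm
      linear_combination e
  -- term identity
  have hterm : ∀ (k : ℕ) (x : ℝ), c (k:ℤ) * Complex.exp (((k:ℤ):ℂ) * x * Complex.I)
        + c (-(k:ℤ)) * Complex.exp (((-(k:ℤ)):ℂ) * x * Complex.I)
      = 2 * Complex.I * (c (k:ℤ) * ((Real.sin (k*x) : ℝ):ℂ))
        + (c (k:ℤ) + c (-(k:ℤ))) * Complex.exp (-(((k:ℤ):ℂ) * x * Complex.I)) := by
    intro k x
    have e1 : ((-(k:ℤ)):ℂ) * x * Complex.I = -(((k:ℤ):ℂ) * x * Complex.I) := by push_cast; ring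
    rw [e1]
    have e2 : Complex.exp (((k:ℤ):ℂ) * x * Complex.I) - Complex.exp (-(((k:ℤ):ℂ) * x * Complex.I))
        = 2 * Complex.I * ((Real.sin (k*x) : ℝ):ℂ) := by
      have e3 : ((k:ℤ):ℂ) * x * Complex.I = (((k:ℝ)*x : ℝ):ℂ) * Complex.I := by push_cast; ring
      rw [e3, ← neg_mul, Complex.exp_mul_I, Complex.exp_mul_I, Complex.cos_neg, Complex.sin_neg,
        ← Complex.ofReal_sin]
      ring
    linear_combination (c ((k:ℕ):ℤ)) * e2
  -- abs of exp factor is one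
  have hexp1 : ∀ (k : ℕ) (x : ℝ), ‖Complex.exp (-(((k:ℤ):ℂ) * x * Complex.I))‖ = 1 := by
    intro k x
    have e : -(((k:ℤ):ℂ) * x * Complex.I) = ((-(k*x) : ℝ):ℂ) * Complex.I := by push_cast; ring
    rw [e, Complex.norm_exp_ofReal_mul_I]
  -- a-tail reindex
  set G : ℕ → ℝ := fun i => ‖c ((i:ℤ) + 1) + c (-((i:ℤ) + 1))‖ with hG
  have hreindex : ∀ (m : ℕ), ∀ n, m ≤ n →
      ∑ k ∈ Finset.Ioc m n, ‖c (k:ℤ) + c (-(k:ℤ))‖ = ∑ i ∈ Finset.Ico m n, G i := by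
    intro m n hn
    induction n, hn using Nat.le_induction with
    | base => simp
    | succ n hn ih =>
      rw [Finset.sum_Ioc_succ_top hn, Finset.sum_Ico_succ_top hn, ih]
      congr 1
  -- partial sums of G are Cauchy
  have hGcauchy : CauchySeq (fun n => ∑ i ∈ Finset.range n, G i) :=
    (h6.hasSum.tendsto_sum_nat).cauchySeq
  -- main uniform Cauchy estimate
  have huc : UniformCauchySeqOn S atTop Set.univ := by
    rw [Metric.uniformCauchySeqOn_iff]
    intro ε hε
    set C : ℝ := 2 * Real.pi + 2 * M + 1 with hC
    have hCpos : 0 < C := by rw [hC]; positivity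
    set δ' : ℝ := ε / (6 * C) with hδ'
    have hδ'pos : 0 < δ' := by rw [hδ']; positivity
    obtain ⟨m₂, hm₂⟩ := Metric.tendsto_atTop.mp h5 δ' hδ'pos
    obtain ⟨m₁, hm₁⟩ := Metric.cauchySeq_iff.mp hGcauchy (ε/3) (by positivity)
    set K : ℕ := max (max m₁ m₂) 1 with hK
    have hδK : ∀ k : ℕ, K ≤ k → (k : ℝ) * ‖c (k : ℤ)‖ ≤ δ' := by
      intro k hk
      have := hm₂ k (le_trans (le_trans (le_max_right m₁ m₂) (le_max_left _ 1)) hk)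
      rw [dist_zero_right, norm_mul, Complex.norm_natCast] at this
      exact this.le
    refine ⟨K, ?_⟩
    have key : ∀ m n : ℕ, K ≤ m → m ≤ n → ∀ x : ℝ, dist (S m x) (S n x) < ε := by
      intro m n hKm hmn x
      rw [dist_eq_norm, ← norm_neg]
      have en : -(S m x - S n x) = S n x - S m x := by ring
      rw [en, hdiff m x n hmn]
      have hsum_eq : ∑ k ∈ Finset.Ioc m n, (c (k:ℤ) * Complex.exp (((k:ℤ):ℂ) * x * Complex.I)
            + c (-(k:ℤ)) * Complex.exp (((-(k:ℤ)):ℂ) * x * Complex.I))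
          = 2 * Complex.I * (∑ k ∈ Finset.Ioc m n, c (k:ℤ) * ((Real.sin (k*x) : ℝ):ℂ))
            + ∑ k ∈ Finset.Ioc m n, (c (k:ℤ) + c (-(k:ℤ))) * Complex.exp (-(((k:ℤ):ℂ) * x * Complex.I)) := by
        rw [Finset.sum_congr rfl (fun k _ => hterm k x), Finset.sum_add_distrib, Finset.mul_sum]
      rw [hsum_eq]
      refine lt_of_le_of_lt (norm_add_le _ _) ?_
      have hpart1 : ‖2 * Complex.I * (∑ k ∈ Finset.Ioc m n, c (k:ℤ) * ((Real.sin (k*x) : ℝ):ℂ))‖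
          ≤ 2 * (C * δ') := by
        rw [norm_mul, norm_mul, Complex.norm_two, Complex.norm_I, mul_one]
        have := sine_tail c N₀ hN₀ M hM h2 δ' K (le_max_right _ 1) hδK m n hKm x
        rw [hC]
        linarith
      have hpart2 : ‖∑ k ∈ Finset.Ioc m n, (c (k:ℤ) + c (-(k:ℤ))) * Complex.exp (-(((k:ℤ):ℂ) * x * Complex.I))‖
          < ε/3 := by
        refine lt_of_le_of_lt (norm_sum_le _ _) ?_
        have e : ∀ k ∈ Finset.Ioc m n,
            ‖(c (k:ℤ) + c (-(k:ℤ))) * Complex.exp (-(((k:ℤ):ℂ) * x * Complex.I))‖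
              = ‖c (k:ℤ) + c (-(k:ℤ))‖ := by
          intro k _
          rw [norm_mul, hexp1 k x, mul_one]
        rw [Finset.sum_congr rfl e, hreindex m n hmn]
        have hsub : ∑ i ∈ Finset.Ico m n, G i
            = (∑ i ∈ Finset.range n, G i) - (∑ i ∈ Finset.range m, G i) :=
          Finset.sum_Ico_eq_sub G hmn
        have hd := hm₁ n (le_trans (le_trans (le_max_left m₁ m₂) (le_max_left _ 1)) (le_trans hKm hmn))
          m (le_trans (le_trans (le_max_left m₁ m₂) (le_max_left _ 1)) hKm)
        rw [Real.dist_eq] at hd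
        calc ∑ i ∈ Finset.Ico m n, G i
            ≤ |(∑ i ∈ Finset.range n, G i) - (∑ i ∈ Finset.range m, G i)| := by
              rw [hsub]; exact le_abs_self _
          _ < ε/3 := hd
      have hC6 : 2 * (C * δ') = ε / 3 := by
        rw [hδ']
        field_simp
        ring
      refine lt_of_le_of_lt (add_le_add hpart1 hpart2.le) ?_
      rw [hC6]
      linarith
    intro a ha b hb x _
    rcases le_total a b with hab | hab
    · exact key a b ha hab x
    · rw [dist_comm]
      exact key b a hb hab x
  -- pointwise limit
  have hptcauchy : ∀ x : ℝ, CauchySeq (fun n => S n x) := by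
    intro x
    rw [Metric.cauchySeq_iff]
    intro ε hε
    obtain ⟨K, hK⟩ := Metric.uniformCauchySeqOn_iff.mp huc ε hε
    exact ⟨K, fun a ha b hb => hK a ha b hb x (Set.mem_univ x)⟩
  set f : ℝ → ℂ := fun x => limUnder atTop (fun n => S n x) with hf
  have hflim : ∀ x : ℝ, Tendsto (fun n => S n x) atTop (nhds (f x)) := fun x =>
    (hptcauchy x).tendsto_limUnder
  have hTU : TendstoUniformly S f atTop :=
    tendstoUniformlyOn_univ.mp (huc.tendstoUniformlyOn_of_tendsto (fun x _ => hflim x))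
  have hScont : ∀ n : ℕ, Continuous (S n) := by
    intro n
    apply continuous_finset_sum
    intro k _
    exact continuous_const.mul (Complex.continuous_exp.comp
      ((continuous_const.mul Complex.continuous_ofReal).mul continuous_const))
  refine ⟨f, hTU.continuous (Eventually.of_forall hScont).frequently, ?_, hTU⟩
  intro x
  have hper : ∀ n : ℕ, S n (x + 2 * Real.pi) = S n x := by
    intro n
    apply Finset.sum_congr rfl
    intro k _
    congr 1
    have e : (k:ℂ) * ((x + 2*Real.pi : ℝ):ℂ) * Complex.I
        = (k:ℂ) * (x:ℂ) * Complex.I + (k:ℂ) * (2 * (Real.pi:ℂ) * Complex.I) := by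
      push_cast; ring
    rw [e, Complex.exp_add, Complex.exp_int_mul_two_pi_mul_I, mul_one]
  have h1 : Tendsto (fun n => S n (x + 2*Real.pi)) atTop (nhds (f (x + 2*Real.pi))) :=
    hflim (x + 2*Real.pi)
  have h2'' : Tendsto (fun n => S n (x + 2*Real.pi)) atTop (nhds (f x)) := by
    simp only [hper]
    exact hflim x
  exact tendsto_nhds_unique h1 h2''
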